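/- Let n ≥ 1 be an integer and let β be the symmetric bilinear form on ℝ⁴ with ordered basis (s, e₂, e₃, F) determined by β(s,s) = −n, β(e₂,e₂) = −2, β(e₃,e₃) = −1, β(e₂,e₃) = 1, β(F,F) = 0, β(s,F) = 1, and β(u,v) = 0 for every other pair of distinct basis vectors. Set e₁ = F − e₂ − e₃. Then {x ∈ ℝ⁴ : β(x, v) ≥ 0 for every v ∈ {s, e₁, e₂, e₃}} = cone({F, nF + s − e₂ − 2e₃, nF + s − e₂ − e₃, nF + s}). -/

import Mathlib

/-- The convex cone generated by a set `s`: all finite nonnegative real linear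
combinations of elements of `s`. -/
def coneHull {E : Type*} [AddCommMonoid E] [Module ℝ E] (s : Set E) : Set E :=
  {x | ∃ (n : ℕ) (c : Fin n → ℝ) (g : Fin n → E),
    (∀ i, 0 ≤ c i) ∧ (∀ i, g i ∈ s) ∧ x = ∑ i, c i • g i}

/-- The intersection form on `ℝ⁴` in the ordered basis `(s, e₂, e₃, F)` determined by
`β(s,s)=−n`, `β(e₂,e₂)=−2`, `β(e₃,e₃)=−1`, `β(e₂,e₃)=1`, `β(F,F)=0`, `β(s,F)=1`, and
`β = 0` on every other pair of distinct basis vectors. -/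
def interForm14 (n : ℕ) (x y : Fin 4 → ℝ) : ℝ :=
  -(n : ℝ) * (x 0 * y 0) - 2 * (x 1 * y 1) - x 2 * y 2 + (x 1 * y 2 + x 2 * y 1) +
    x 0 * y 3 + x 3 * y 0

/-!
The four generators of the nef cone form the basis of `ℝ⁴` that is dual, with respect to `β`,
to the generators `(s, e₁, e₂, e₃)` of the effective cone. Hence every `x` expands as
`∑ β(x, eᵢ) • eᵢ^∨`, whose coefficients are nonnegative exactly when `x` lies in the dual
cone; conversely `β(-, v)` is linear, so it is nonnegative on the cone spanned by the `eᵢ^∨`.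
-/

theorem nonneg_of_mem_coneHull {E : Type*} [AddCommMonoid E] [Module ℝ E] {s : Set E}
    (φ : E →ₗ[ℝ] ℝ) (hs : ∀ g ∈ s, 0 ≤ φ g) {x : E} (hx : x ∈ coneHull s) : 0 ≤ φ x := by
  obtain ⟨m, c, g, hc, hg, rfl⟩ := hx
  rw [map_sum]
  exact Finset.sum_nonneg fun i _ => by
    rw [map_smul, smul_eq_mul]
    exact mul_nonneg (hc i) (hs _ (hg i))

def interForm14Left (n : ℕ) (v : Fin 4 → ℝ) : (Fin 4 → ℝ) →ₗ[ℝ] ℝ where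
  toFun x := interForm14 n x v
  map_add' x y := by simp only [interForm14, Pi.add_apply]; ring
  map_smul' c x := by simp only [interForm14, Pi.smul_apply, smul_eq_mul, RingHom.id_apply]; ring

/-- `(s, e₁, e₂, e₃)` in the coordinates of the basis `(s, e₂, e₃, F)`. -/
def effGen14 : Fin 4 → Fin 4 → ℝ :=
  ![![1, 0, 0, 0], ![0, -1, -1, 1], ![0, 1, 0, 0], ![0, 0, 1, 0]]

/-- `(F, nF + s, nF + s − e₂ − e₃, nF + s − e₂ − 2e₃)` in the coordinates of `(s, e₂, e₃, F)`. -/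
def nefGen14 (n : ℕ) : Fin 4 → Fin 4 → ℝ :=
  ![![0, 0, 0, 1], ![1, 0, 0, n], ![1, -1, -1, n], ![1, -1, -2, n]]

theorem range_effGen14 :
    Set.range effGen14 = {![1, 0, 0, 0], ![0, -1, -1, 1], ![0, 1, 0, 0], ![0, 0, 1, 0]} := by
  simp only [effGen14, Matrix.range_cons, Matrix.range_empty, Set.union_empty,
    Set.singleton_union]

theorem range_nefGen14 (n : ℕ) :
    Set.range (nefGen14 n) =
      {![0, 0, 0, 1], ![1, -1, -2, (n : ℝ)], ![1, -1, -1, (n : ℝ)], ![1, 0, 0, (n : ℝ)]} := by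
  simp only [nefGen14, Matrix.range_cons, Matrix.range_empty, Set.union_empty,
    Set.singleton_union]
  ext x
  simp only [Set.mem_insert_iff, Set.mem_singleton_iff]
  tauto

theorem interForm14_nefGen14_effGen14 (n : ℕ) (i j : Fin 4) :
    interForm14 n (nefGen14 n i) (effGen14 j) = if i = j then 1 else 0 := by
  fin_cases i <;> fin_cases j <;> simp [interForm14, nefGen14, effGen14] <;> norm_num

theorem sum_interForm14_effGen14_smul_nefGen14 (n : ℕ) (x : Fin 4 → ℝ) :
    ∑ i, interForm14 n x (effGen14 i) • nefGen14 n i = x := by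
  funext k
  fin_cases k <;> simp [Fin.sum_univ_four, interForm14, nefGen14, effGen14] <;> ring

theorem statement14_general (n : ℕ) :
    {x : Fin 4 → ℝ | ∀ v ∈ ({![1, 0, 0, 0], ![0, -1, -1, 1], ![0, 1, 0, 0],
        ![0, 0, 1, 0]} : Set (Fin 4 → ℝ)), 0 ≤ interForm14 n x v} =
      coneHull {![0, 0, 0, 1], ![1, -1, -2, (n : ℝ)], ![1, -1, -1, (n : ℝ)],
        ![1, 0, 0, (n : ℝ)]} := by
  rw [← range_effGen14, ← range_nefGen14 n]
  ext x
  constructor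
  · intro hx
    rw [← sum_interForm14_effGen14_smul_nefGen14 n x]
    exact ⟨4, _, nefGen14 n, fun i => hx _ ⟨i, rfl⟩, fun i => ⟨i, rfl⟩, rfl⟩
  · rintro hx _ ⟨j, rfl⟩
    refine nonneg_of_mem_coneHull (interForm14Left n (effGen14 j)) ?_ hx
    rintro _ ⟨i, rfl⟩
    change 0 ≤ interForm14 n (nefGen14 n i) (effGen14 j)
    rw [interForm14_nefGen14_effGen14]
    split_ifs <;> norm_num

/-- With `e₁ = F − e₂ − e₃`, the dual cone of `{s, e₁, e₂, e₃}` with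
respect to the intersection form is generated by `F`, `nF + s − e₂ − 2e₃`,
`nF + s − e₂ − e₃`, `nF + s`. -/
theorem statement14 (n : ℕ) (hn : 1 ≤ n) :
    {x : Fin 4 → ℝ | ∀ v ∈ ({![1, 0, 0, 0], ![0, -1, -1, 1], ![0, 1, 0, 0],
        ![0, 0, 1, 0]} : Set (Fin 4 → ℝ)), 0 ≤ interForm14 n x v} =
      coneHull {![0, 0, 0, 1], ![1, -1, -2, (n : ℝ)], ![1, -1, -1, (n : ℝ)],
        ![1, 0, 0, (n : ℝ)]} :=
  statement14_general n
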